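/- arXiv:2511.16976 — 3 statements merged into one kernel-verified Lean document; each statement's English description precedes it below -/
import Mathlib

section
/- If θ(t) = (θ₁(t), θ₂(t)) solves the gradient flow ODE θ₁' = -2·Σ·(θ₁/(1-θ₂)² - ξ/(1-θ₂)) and θ₂' = -2·(θ₁ᵀ/(1-θ₂)²)·Σ·(θ₁/(1-θ₂) - ξ) on an interval where θ₂(t) ≠ 1, then the quantity ‖θ₁(t)‖₂² + (θ₂(t) - 1)² is constant along the trajectory. -/
open Matrix

/-!
Differentiating, `d/dt ‖θ₁‖² = 2 θ₁ ⬝ᵥ θ₁'` and `d/dt (θ₂ - 1)² = -2 (1 - θ₂) θ₂'`, and both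
`θ₁ ⬝ᵥ θ₁'` and `(1 - θ₂) θ₂'` equal `-2 (1 - θ₂)⁻¹ θ₁ ⬝ᵥ Σ ((1 - θ₂)⁻¹ θ₁ - ξ)`.
So the derivative of the quantity vanishes, and a function with zero derivative on a convex set
is constant there.
-/

theorem Convex.eq_of_forall_hasDerivWithinAt_zero {E : Type*} [NormedAddCommGroup E]
    [NormedSpace ℝ E] {f : ℝ → E} {s : Set ℝ} (hs : Convex ℝ s)
    (hf : ∀ x ∈ s, HasDerivWithinAt f 0 s x) {x y : ℝ} (hx : x ∈ s) (hy : y ∈ s) :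
    f y = f x := by
  simpa [sub_eq_zero] using
    hs.norm_image_sub_le_of_norm_hasDerivWithin_le (C := 0) hf (by simp) hx hy

theorem HasDerivWithinAt.dotProduct {𝕜 ι : Type*} [NontriviallyNormedField 𝕜] [Fintype ι]
    {f g : 𝕜 → ι → 𝕜} {f' g' : ι → 𝕜} {s : Set 𝕜} {x : 𝕜}
    (hf : HasDerivWithinAt f f' s x) (hg : HasDerivWithinAt g g' s x) :
    HasDerivWithinAt (fun t => f t ⬝ᵥ g t) (f' ⬝ᵥ g x + f x ⬝ᵥ g') s x := by
  simp only [_root_.dotProduct, ← Finset.sum_add_distrib]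
  exact HasDerivWithinAt.fun_sum fun i _ =>
    (hasDerivWithinAt_pi.1 hf i).mul (hasDerivWithinAt_pi.1 hg i)

theorem dotProduct_mulVec_inv_sq_smul_sub {K n : Type*} [Field K] [Fintype n]
    (M : Matrix n n K) (a ξ : n → K) (c : K) :
    a ⬝ᵥ M *ᵥ ((1 / c ^ 2) • a - (1 / c) • ξ) =
      c * ((1 / c ^ 2) • a ⬝ᵥ M *ᵥ ((1 / c) • a - ξ)) := by
  rcases eq_or_ne c 0 with rfl | hc
  · simp
  · simp only [mulVec_sub, mulVec_smul, dotProduct_sub, dotProduct_smul, smul_dotProduct,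
      smul_eq_mul]
    field_simp

theorem gradient_flow_conservation_general {d : ℕ}
    (Sig : Matrix (Fin d) (Fin d) ℝ)
    (ξ : Fin d → ℝ)
    (I : Set ℝ) (hI : Convex ℝ I) (h0 : (0 : ℝ) ∈ I)
    (θ₁ : ℝ → Fin d → ℝ) (θ₂ : ℝ → ℝ)
    (hθ₁ : ∀ t ∈ I, HasDerivWithinAt θ₁
      ((-2 : ℝ) • Sig.mulVec ((1 / (1 - θ₂ t) ^ 2) • θ₁ t - (1 / (1 - θ₂ t)) • ξ)) I t)
    (hθ₂ : ∀ t ∈ I, HasDerivWithinAt θ₂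
      (-2 * (((1 / (1 - θ₂ t) ^ 2) • θ₁ t) ⬝ᵥ Sig.mulVec ((1 / (1 - θ₂ t)) • θ₁ t - ξ))) I t) :
    ∀ t ∈ I, θ₁ t ⬝ᵥ θ₁ t + (θ₂ t - 1) ^ 2 = θ₁ 0 ⬝ᵥ θ₁ 0 + (θ₂ 0 - 1) ^ 2 := by
  intro t ht
  refine hI.eq_of_forall_hasDerivWithinAt_zero
    (f := fun s => θ₁ s ⬝ᵥ θ₁ s + (θ₂ s - 1) ^ 2) (fun s hs => ?_) h0 ht
  convert ((hθ₁ s hs).dotProduct (hθ₁ s hs)).fun_add (((hθ₂ s hs).sub_const 1).fun_pow 2) using 1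
  rw [dotProduct_comm _ (θ₁ s), dotProduct_smul, dotProduct_mulVec_inv_sq_smul_sub]
  push_cast [smul_eq_mul]
  ring

/-- Along any solution of the linear DEQ gradient-flow ODE
`θ₁' = -2 Σ (θ₁/(1-θ₂)² - ξ/(1-θ₂))`,
`θ₂' = -2 (θ₁ᵀ/(1-θ₂)²) Σ (θ₁/(1-θ₂) - ξ)`
on an interval `I ∋ 0` where `θ₂(t) ≠ 1`, the quantity
`‖θ₁(t)‖₂² + (θ₂(t) - 1)²` is constant. -/
theorem gradient_flow_conservation {d : ℕ}
    (Sig : Matrix (Fin d) (Fin d) ℝ) (hSym : Sig.IsSymm) (hPSD : Sig.PosSemidef)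
    (ξ : Fin d → ℝ)
    (I : Set ℝ) (hI : Convex ℝ I) (h0 : (0 : ℝ) ∈ I)
    (θ₁ : ℝ → Fin d → ℝ) (θ₂ : ℝ → ℝ)
    (hne : ∀ t ∈ I, θ₂ t ≠ 1)
    (hθ₁ : ∀ t ∈ I, HasDerivWithinAt θ₁
      ((-2 : ℝ) • Sig.mulVec ((1 / (1 - θ₂ t) ^ 2) • θ₁ t - (1 / (1 - θ₂ t)) • ξ)) I t)
    (hθ₂ : ∀ t ∈ I, HasDerivWithinAt θ₂
      (-2 * (((1 / (1 - θ₂ t) ^ 2) • θ₁ t) ⬝ᵥ Sig.mulVec ((1 / (1 - θ₂ t)) • θ₁ t - ξ))) I t) :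
    ∀ t ∈ I, θ₁ t ⬝ᵥ θ₁ t + (θ₂ t - 1) ^ 2 = θ₁ 0 ⬝ᵥ θ₁ 0 + (θ₂ 0 - 1) ^ 2 :=
  gradient_flow_conservation_general Sig ξ I hI h0 θ₁ θ₂ hθ₁ hθ₂
end

section
/- Let φ(t) = θ₁(t)/(1 - θ₂(t)) where θ solves the linear DEQ gradient flow with data covariance Σ ≻ 0. Then φ'(t) = -(2/(1-θ₂(t))²)·(I_d + φ(t)φ(t)ᵀ)·Σ·(φ(t) - ξ). -/
open Matrix

/-! With `c = 1 - θ₂` the quotient rule gives `φ' = c⁻¹ (θ₁' + θ₂' φ)`. Both right-hand sides of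
the flow are `-(2/c)` times a quantity expressed through `φ` alone, namely `Σ(φ - ξ)` and
`φᵀΣ(φ - ξ)`, so `θ₁' + θ₂' φ = -(2/c) (I + φφᵀ) Σ (φ - ξ)`. -/

theorem HasDerivWithinAt.one_div_smul {E : Type*} [NormedAddCommGroup E] [NormedSpace ℝ E]
    {c : ℝ → ℝ} {g : ℝ → E} {c' : ℝ} {g' : E} {s : Set ℝ} {t : ℝ}
    (hc : HasDerivWithinAt c c' s t) (hg : HasDerivWithinAt g g' s t) (hct : c t ≠ 0) :
    HasDerivWithinAt (fun x => (1 / c x) • g x)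
      ((1 / c t) • (g' - c' • ((1 / c t) • g t))) s t := by
  simp only [one_div]
  refine ((hc.inv hct).smul hg).congr_deriv ?_
  rw [smul_sub, smul_smul, smul_smul, sub_eq_add_neg, ← neg_smul]
  congr 2
  field_simp

theorem phi_derivative_formula_general {d : ℕ}
    (Sig : Matrix (Fin d) (Fin d) ℝ)
    (ξ : Fin d → ℝ)
    (I : Set ℝ)
    (θ₁ : ℝ → Fin d → ℝ) (θ₂ : ℝ → ℝ)
    (hne : ∀ t ∈ I, θ₂ t ≠ 1)
    (hθ₁ : ∀ t ∈ I, HasDerivWithinAt θ₁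
      ((-2 : ℝ) • Sig.mulVec ((1 / (1 - θ₂ t) ^ 2) • θ₁ t - (1 / (1 - θ₂ t)) • ξ)) I t)
    (hθ₂ : ∀ t ∈ I, HasDerivWithinAt θ₂
      (-2 * (((1 / (1 - θ₂ t) ^ 2) • θ₁ t) ⬝ᵥ Sig.mulVec ((1 / (1 - θ₂ t)) • θ₁ t - ξ))) I t) :
    ∀ t ∈ I, HasDerivWithinAt (fun s => (1 / (1 - θ₂ s)) • θ₁ s)
      ((-2 / (1 - θ₂ t) ^ 2) •
        (Sig.mulVec ((1 / (1 - θ₂ t)) • θ₁ t - ξ) +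
          (((1 / (1 - θ₂ t)) • θ₁ t) ⬝ᵥ Sig.mulVec ((1 / (1 - θ₂ t)) • θ₁ t - ξ)) •
            ((1 / (1 - θ₂ t)) • θ₁ t))) I t := by
  intro t ht
  have hc : 1 - θ₂ t ≠ 0 := sub_ne_zero.2 (hne t ht).symm
  have hφ := ((hθ₂ t ht).const_sub 1).one_div_smul (hθ₁ t ht) hc
  set c := 1 - θ₂ t
  set φ := (1 / c) • θ₁ t
  have hθ₁φ : (1 / c ^ 2) • θ₁ t = (1 / c) • φ := by
    rw [smul_smul, one_div_mul_one_div, sq]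
  refine hφ.congr_deriv ?_
  rw [hθ₁φ, ← smul_sub, mulVec_smul, smul_dotProduct, smul_eq_mul]
  match_scalars <;> field_simp

/-- Let `φ(t) = θ₁(t)/(1-θ₂(t))` along the linear DEQ gradient flow with
`Σ ≻ 0`. Then `φ'(t) = -(2/(1-θ₂(t))²) (I_d + φ(t)φ(t)ᵀ) Σ (φ(t) - ξ)`, i.e.
`φ' = -(2/(1-θ₂)²) • (Σ(φ-ξ) + (φᵀΣ(φ-ξ)) φ)`. -/
theorem phi_derivative_formula {d : ℕ}
    (Sig : Matrix (Fin d) (Fin d) ℝ) (hSym : Sig.IsSymm) (hPD : Sig.PosDef)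
    (ξ : Fin d → ℝ)
    (I : Set ℝ) (hI : Convex ℝ I)
    (θ₁ : ℝ → Fin d → ℝ) (θ₂ : ℝ → ℝ)
    (hne : ∀ t ∈ I, θ₂ t ≠ 1)
    (hθ₁ : ∀ t ∈ I, HasDerivWithinAt θ₁
      ((-2 : ℝ) • Sig.mulVec ((1 / (1 - θ₂ t) ^ 2) • θ₁ t - (1 / (1 - θ₂ t)) • ξ)) I t)
    (hθ₂ : ∀ t ∈ I, HasDerivWithinAt θ₂
      (-2 * (((1 / (1 - θ₂ t) ^ 2) • θ₁ t) ⬝ᵥ Sig.mulVec ((1 / (1 - θ₂ t)) • θ₁ t - ξ))) I t) :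
    ∀ t ∈ I, HasDerivWithinAt (fun s => (1 / (1 - θ₂ s)) • θ₁ s)
      ((-2 / (1 - θ₂ t) ^ 2) •
        (Sig.mulVec ((1 / (1 - θ₂ t)) • θ₁ t - ξ) +
          (((1 / (1 - θ₂ t)) • θ₁ t) ⬝ᵥ Sig.mulVec ((1 / (1 - θ₂ t)) • θ₁ t - ξ)) •
            ((1 / (1 - θ₂ t)) • θ₁ t))) I t :=
  phi_derivative_formula_general Sig ξ I θ₁ θ₂ hne hθ₁ hθ₂
end

section
/- For the linear DEQ gradient descent iterates θ(t+1) = θ(t) - η·∇R(θ(t)), the quantity w(t) = ‖θ(t) - (0,1)‖₂² satisfies the exact recursion w(t+1) = w(t) + η²·‖∇R(θ(t))‖₂², because the gradient of the risk is orthogonal to θ(t) - (0,1): (θ₁(t))ᵀ·(∂R/∂θ₁) + (θ₂(t) - 1)·(∂R/∂θ₂) = 0. -/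
open Matrix

/-- For the linear DEQ risk with gradient
`∇R = 2 (Σ(θ₁/(1-θ₂)² - ξ/(1-θ₂)), (θ₁ᵀ/(1-θ₂)²) Σ (θ₁/(1-θ₂) - ξ))`, the gradient
is orthogonal to `θ - (0,1)`, and hence a gradient descent step
`θ⁺ = θ - η ∇R(θ)` satisfies the exact recursion
`‖θ⁺ - (0,1)‖₂² = ‖θ - (0,1)‖₂² + η² ‖∇R(θ)‖₂²`. -/
theorem gd_distance_recursion {d : ℕ}
    (Sig : Matrix (Fin d) (Fin d) ℝ) (hSym : Sig.IsSymm)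
    (ξ θ₁ : Fin d → ℝ) (θ₂ η : ℝ) (hθ₂ : θ₂ ≠ 1)
    (g₁ : Fin d → ℝ) (g₂ : ℝ)
    (hg₁ : g₁ = (2 : ℝ) • Sig.mulVec ((1 / (1 - θ₂) ^ 2) • θ₁ - (1 / (1 - θ₂)) • ξ))
    (hg₂ : g₂ = 2 * (((1 / (1 - θ₂) ^ 2) • θ₁) ⬝ᵥ Sig.mulVec ((1 / (1 - θ₂)) • θ₁ - ξ))) :
    θ₁ ⬝ᵥ g₁ + (θ₂ - 1) * g₂ = 0 ∧
      (θ₁ - η • g₁) ⬝ᵥ (θ₁ - η • g₁) + ((θ₂ - η * g₂) - 1) ^ 2 =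
        (θ₁ ⬝ᵥ θ₁ + (θ₂ - 1) ^ 2) + η ^ 2 * (g₁ ⬝ᵥ g₁ + g₂ ^ 2) := by
  have key : (1 / (1 - θ₂) ^ 2) • θ₁ - (1 / (1 - θ₂)) • ξ
      = (1 / (1 - θ₂)) • ((1 / (1 - θ₂)) • θ₁ - ξ) := by
    rw [smul_sub, smul_smul, show (1/(1-θ₂))*(1/(1-θ₂)) = 1/(1-θ₂)^2 by rw [div_mul_div_comm, one_mul, ← sq]]
  have horth : θ₁ ⬝ᵥ g₁ + (θ₂ - 1) * g₂ = 0 := by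
    subst hg₁ hg₂
    rw [key]
    simp only [mulVec_smul, dotProduct_smul, smul_dotProduct, smul_eq_mul, smul_smul]
    have h1 : (1 - θ₂) ≠ 0 := sub_ne_zero.mpr (Ne.symm hθ₂)
    set X := θ₁ ⬝ᵥ Sig *ᵥ ((1 / (1 - θ₂)) • θ₁ - ξ)
    field_simp
    ring
  refine ⟨horth, ?_⟩
  have hd : θ₁ ⬝ᵥ g₁ = -((θ₂ - 1) * g₂) := by linarith
  have hcomm : g₁ ⬝ᵥ θ₁ = θ₁ ⬝ᵥ g₁ := dotProduct_comm _ _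
  simp only [sub_dotProduct, dotProduct_sub, smul_dotProduct, dotProduct_smul, smul_eq_mul]
  rw [hcomm, hd]
  ring
end
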